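/- Suppose that the Credit Invariant and the Matching Invariant hold for T, M, and I, and that T/I admits no greedy link contraction. If T' is a deficient semi-closed tree of T/I then |C'| = 0 and one of the following holds: (i) |M'| = |S'| = 0 and tickets(T') ≤ 1; or (ii) |M'| = 1, |S'| ≤ 2, and tickets(T') = 0. -/
import Mathlib


open scoped Classical

namespace TAP

/-- A rooted tree on vertex set `V`, given by a parent function. -/
structure Tree (V : Type) where
  root : V
  parent : V → V
  parent_root : parent root = root
  reach : ∀ v, ∃ n, parent^[n] v = root

namespace Tree

variable {V : Type} (t : Tree V)

/-- `t.desc w v` : `v` lies in the rooted subtree `T_w`, i.e. `w` is an ancestor of `v` or `w = v`. -/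
def desc (w v : V) : Prop := ∃ n, t.parent^[n] v = w

/-- The depth of a node (its distance to the root). -/
noncomputable def depth (v : V) : ℕ :=
  @Nat.find (fun n => t.parent^[n] v = t.root) (Classical.decPred _) (t.reach v)

/-- `v` is a leaf of the tree: it is not the root and it has no children. -/
def IsLeaf (v : V) : Prop := v ≠ t.root ∧ ∀ u, u ≠ v → t.parent u ≠ v

/-- The tree edge `(w, parent w)` (for `w ≠ root`) lies on the tree path `P(u,v)`. -/
def onPath (w u v : V) : Prop :=
  (t.desc w u ∧ ¬ t.desc w v) ∨ (t.desc w v ∧ ¬ t.desc w u)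

/-- The node `c` lies on the tree path `P(u,v)`. -/
def onPathNode (c u v : V) : Prop :=
  (t.desc c u ∨ t.desc c v) ∧ ∀ w, t.desc w u → t.desc w v → t.desc w c

/-- `u` is the least common ancestor of `a` and `b`. -/
def IsLCA (u a b : V) : Prop :=
  t.desc u a ∧ t.desc u b ∧ ∀ w, t.desc w a → t.desc w b → t.desc w u

end Tree

variable {V : Type} [Fintype V] [DecidableEq V]

/-- The link `e` covers the tree edge `(w, parent w)`. -/
def covers (t : Tree V) (e : Sym2 V) (w : V) : Prop :=
  ∃ u v, e = s(u, v) ∧ t.onPath w u v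

/-- Some link of `F` covers the tree edge `(w, parent w)`. -/
def coveredBy (t : Tree V) (F : Finset (Sym2 V)) (w : V) : Prop :=
  ∃ e ∈ F, covers t e w

/-- `F` covers the tree: every tree edge is covered by some link of `F`
(equivalently, `T ∪ F` is 2-edge-connected). -/
def IsCover (t : Tree V) (F : Finset (Sym2 V)) : Prop :=
  ∀ w, w ≠ t.root → coveredBy t F w

/-- `e'` is a shadow of `e`, i.e. `P(e') ⊆ P(e)`. -/
def Shadow (t : Tree V) (e' e : Sym2 V) : Prop := ∀ w, covers t e' w → covers t e w

/-- `e'` is a proper shadow of `e`. -/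
def ProperShadow (t : Tree V) (e' e : Sym2 V) : Prop :=
  Shadow t e' e ∧ ∃ w, covers t e w ∧ ¬ covers t e' w

/-- The link set `E` is closed under shadows. -/
def ShadowClosed (t : Tree V) (E : Finset (Sym2 V)) : Prop :=
  ∀ e ∈ E, ∀ e' : Sym2 V, ¬ e'.IsDiag → Shadow t e' e → e' ∈ E

/-- `F` is an (inclusion-minimal) shadows-minimal cover: replacing any link of `F` by a
proper shadow of it destroys the covering property. -/
def ShadowsMinimal (t : Tree V) (F : Finset (Sym2 V)) : Prop :=
  IsCover t F ∧ (∀ e ∈ F, ¬ IsCover t (F.erase e)) ∧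
  ∀ e ∈ F, ∀ e' : Sym2 V, ProperShadow t e' e → ¬ IsCover t (insert e' (F.erase e))

/-- `deg Y x` : the number of links of `Y` incident to `x`. -/
noncomputable def deg (Y : Finset (Sym2 V)) (x : V) : ℕ := (Y.filter (fun e => x ∈ e)).card

/-! ### Contraction of a set of links -/

/-- `u` and `v` lie in the same 2-edge-connected component of `T ∪ I`,
i.e. they get identified in `T/I`. -/
def rel (t : Tree V) (I : Finset (Sym2 V)) (u v : V) : Prop :=
  ∀ w, w ≠ t.root → t.onPath w u v → coveredBy t I w

def relSetoid (t : Tree V) (I : Finset (Sym2 V)) : Setoid V where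
  r := rel t I
  iseqv := by
    refine ⟨?_, ?_, ?_⟩
    · intro u w _ hp
      rcases hp with ⟨h1, h2⟩ | ⟨h1, h2⟩ <;> exact absurd h1 h2
    · intro u v h w hw hp
      refine h w hw ?_
      rcases hp with ⟨h1, h2⟩ | ⟨h1, h2⟩
      · exact Or.inr ⟨h1, h2⟩
      · exact Or.inl ⟨h1, h2⟩
    · intro u v x h1 h2 w hw hp
      by_cases hv : t.desc w v
      · rcases hp with ⟨ha, hb⟩ | ⟨ha, hb⟩
        · exact h2 w hw (Or.inl ⟨hv, hb⟩)
        · exact h1 w hw (Or.inr ⟨hv, hb⟩)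
      · rcases hp with ⟨ha, hb⟩ | ⟨ha, hb⟩
        · exact h1 w hw (Or.inl ⟨ha, hv⟩)
        · exact h2 w hw (Or.inr ⟨ha, hv⟩)

/-- The node set of the contracted tree `T/I`. -/
abbrev QT (t : Tree V) (I : Finset (Sym2 V)) : Type := Quotient (relSetoid t I)

noncomputable instance instFintypeQT (t : Tree V) (I : Finset (Sym2 V)) : Fintype (QT t I) :=
  @Quotient.fintype V _ (relSetoid t I) (Classical.decRel _)

/-- The node of `T/I` corresponding to the node `x` of `T`. -/
def qm (t : Tree V) (I : Finset (Sym2 V)) (x : V) : QT t I := Quotient.mk (relSetoid t I) x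

/-- The class of `u` is a (possibly compound) leaf of `T/I`. -/
def qleafRep (t : Tree V) (I : Finset (Sym2 V)) (u : V) : Prop :=
  ¬ rel t I u t.root ∧ ∀ v, rel t I (t.parent v) u → rel t I v u

/-- The class of `u` lies in the rooted subtree of `T/I` rooted at the class of `v`. -/
def qdescRep (t : Tree V) (I : Finset (Sym2 V)) (v u : V) : Prop :=
  ∃ w, t.desc w u ∧ rel t I w v

/-- The class of `u` is a compound node of `T/I` (a contracted component, or the root). -/
def qcompoundRep (t : Tree V) (I : Finset (Sym2 V)) (u : V) : Prop :=
  (∃ w, w ≠ u ∧ rel t I u w) ∨ rel t I u t.root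

/-- The node `x` of `T` lies in the rooted subtree of `T/I` whose root is the class `c`. -/
def inT (t : Tree V) (I : Finset (Sym2 V)) (c : QT t I) (x : V) : Prop :=
  qdescRep t I c.out x

/-- The node `d` of `T/I` lies in the rooted subtree of `T/I` whose root is `c`. -/
def below (t : Tree V) (I : Finset (Sym2 V)) (c d : QT t I) : Prop := inT t I c d.out

/-- The class of `x` is matched by the matching `M`. -/
def matchedRep (t : Tree V) (I M : Finset (Sym2 V)) (x : V) : Prop :=
  ∃ e ∈ M, ∃ z, z ∈ e ∧ rel t I z x

/-- The class of `x` lies on the path of `T/I` between the classes of `u` and of `v`. -/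
def qOnPathNode (t : Tree V) (I : Finset (Sym2 V)) (x u v : V) : Prop :=
  (qdescRep t I x u ∨ qdescRep t I x v) ∧
  ∀ w, qdescRep t I w u → qdescRep t I w v → qdescRep t I w x

/-- The class of `x` is the least common ancestor in `T/I` of the classes of `a` and `b`. -/
def qIsLCA (t : Tree V) (I : Finset (Sym2 V)) (x a b : V) : Prop :=
  qdescRep t I x a ∧ qdescRep t I x b ∧
  ∀ w, qdescRep t I w a → qdescRep t I w b → qdescRep t I w x

/-- Depth of the class of `x` in `T/I`. -/
noncomputable def qdepth (t : Tree V) (I : Finset (Sym2 V)) (x : V) : ℕ :=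
  (Finset.univ.filter (fun w => w ≠ t.root ∧ ¬ coveredBy t I w ∧ t.desc w x)).card

/-- `u` is an up-node of (the class of) `a` in `T/I` : among all links of `E` leaving the
class of `a`, some link from the class of `a` to `u` has its other end as close as possible
to the root. -/
def qUpNode (t : Tree V) (I E : Finset (Sym2 V)) (a u : V) : Prop :=
  (∃ b, rel t I b a ∧ s(b, u) ∈ E) ∧ ¬ rel t I u a ∧
  ∀ b x, rel t I b a → s(b, x) ∈ E → ¬ rel t I x a → qdepth t I u ≤ qdepth t I x

/-- `s(a,b)` is a twin link of `T/I` : a link of `E` between two distinct leaves of `T/I`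
whose contraction results in a new leaf. -/
def qTwinAt (t : Tree V) (I E : Finset (Sym2 V)) (a b : V) : Prop :=
  qleafRep t I a ∧ qleafRep t I b ∧ ¬ rel t I a b ∧ s(a, b) ∈ E ∧
  qleafRep t (insert (s(a, b)) I) a

/-- The class of `x` is a stem of `T/I` : the least common ancestor of the two ends
of a twin link. -/
def qStem (t : Tree V) (I E : Finset (Sym2 V)) (x : V) : Prop :=
  ∃ a b, qTwinAt t I E a b ∧ qIsLCA t I x a b

/-! ### Twin links, stems, up-links and locked leaves in the original tree -/

/-- `a` and `b` are twins: two leaves such that the contraction of the link `ab`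
results in a new leaf. -/
def TwinPair (t : Tree V) (a b : V) : Prop :=
  t.IsLeaf a ∧ t.IsLeaf b ∧ a ≠ b ∧ qleafRep t {s(a, b)} a

/-- `e` is a twin link. -/
def IsTwinLinkE (t : Tree V) (e : Sym2 V) : Prop := ∃ a b, e = s(a, b) ∧ TwinPair t a b

/-- `x` is a stem: the least common ancestor of two twins. -/
def IsStem (t : Tree V) (E : Finset (Sym2 V)) (x : V) : Prop :=
  ∃ a b, TwinPair t a b ∧ s(a, b) ∈ E ∧ t.IsLCA x a b

noncomputable def stems (t : Tree V) (E : Finset (Sym2 V)) : Finset V :=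
  Finset.univ.filter (IsStem t E)

/-- `X = V \ (L ∪ S)`. -/
noncomputable def Xset (t : Tree V) (E : Finset (Sym2 V)) : Finset V :=
  Finset.univ.filter (fun x => ¬ t.IsLeaf x ∧ ¬ IsStem t E x)

/-- `s(a,u)` is the up-link of `a` : among all links of `E` at `a`, its other end `u` is
as close as possible to the root (`u` is the up-node of `a`). -/
def IsUpLink (t : Tree V) (E : Finset (Sym2 V)) (a u : V) : Prop :=
  s(a, u) ∈ E ∧ ∀ x, s(a, x) ∈ E → t.depth u ≤ t.depth x

/-- The rooted subtree `T_v` is `a`-closed: it contains the up-node of `a`. -/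
def AClosed (t : Tree V) (E : Finset (Sym2 V)) (v a : V) : Prop :=
  ∀ u, IsUpLink t E a u → t.desc v u

/-- The rooted proper subtree `T_v` witnesses that the leaf `a` is locked by the link `bb'` :
`L(T_v) = {a,b,b'}`, `ab` is a twin link and `T_v` is `a`-closed. -/
def LocksAt (t : Tree V) (E : Finset (Sym2 V)) (b b' a v : V) : Prop :=
  v ≠ t.root ∧ s(b, b') ∈ E ∧ b ≠ b' ∧ b' ≠ a ∧
  {x | t.IsLeaf x ∧ t.desc v x} = {a, b, b'} ∧
  TwinPair t a b ∧ s(a, b) ∈ E ∧ AClosed t E v a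

/-- The leaf `a` is locked by the link `bb'`. -/
def Locks (t : Tree V) (E : Finset (Sym2 V)) (b b' a : V) : Prop :=
  ∃ v, LocksAt t E b b' a v

def IsLockedLeaf (t : Tree V) (E : Finset (Sym2 V)) (a : V) : Prop :=
  ∃ b b', Locks t E b b' a

def IsLockingLink (t : Tree V) (E : Finset (Sym2 V)) (e : Sym2 V) : Prop :=
  ∃ b b' a, e = s(b, b') ∧ Locks t E b b' a

/-- `T_v` is the locking tree of `a` (with locking link `bb'`): the minimal rooted subtree
witnessing the lock. -/
def IsLockingTree (t : Tree V) (E : Finset (Sym2 V)) (a b b' v : V) : Prop :=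
  LocksAt t E b b' a v ∧ ∀ v', LocksAt t E b b' a v' → t.desc v' v

/-! ### The fixed optimal cover `F` -/

noncomputable def twinCount (t : Tree V) (F : Finset (Sym2 V)) : ℕ :=
  (F.filter (fun e => IsTwinLinkE t e)).card

/-- `F` is an optimal (minimum-size) shadows-minimal cover of `T` with the maximum
number of twin links. -/
def IsGoodCover (t : Tree V) (E F : Finset (Sym2 V)) : Prop :=
  F ⊆ E ∧ ShadowsMinimal t F ∧
  (∀ F' : Finset (Sym2 V), F' ⊆ E → IsCover t F' → F.card ≤ F'.card) ∧
  (∀ F' : Finset (Sym2 V), F' ⊆ E → ShadowsMinimal t F' → F'.card = F.card →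
    twinCount t F' ≤ twinCount t F)

/-! ### Matchings and the lower bound -/

def IsMatching (M : Finset (Sym2 V)) : Prop :=
  (∀ e ∈ M, ¬ e.IsDiag) ∧ ∀ e ∈ M, ∀ f ∈ M, e ≠ f → ∀ x, x ∈ e → x ∉ f

/-- `E(L,L)` : the links of `E` joining two leaves. -/
noncomputable def leafLinks (t : Tree V) (E : Finset (Sym2 V)) : Finset (Sym2 V) :=
  E.filter (fun e => ∀ x ∈ e, t.IsLeaf x)

/-- `W` : the set of twin links and locking links. -/
noncomputable def Wlinks (t : Tree V) (E : Finset (Sym2 V)) : Finset (Sym2 V) :=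
  E.filter (fun e => IsTwinLinkE t e ∨ IsLockingLink t E e)

/-- `M` is a maximum matching in `E(L,L) \ W`. -/
def IsMaxLeafMatching (t : Tree V) (E M : Finset (Sym2 V)) : Prop :=
  M ⊆ leafLinks t E \ Wlinks t E ∧ IsMatching M ∧
  ∀ M' : Finset (Sym2 V), M' ⊆ leafLinks t E \ Wlinks t E → IsMatching M' → M'.card ≤ M.card

/-- `U` : the set of leaves unmatched by `M`. -/
noncomputable def unmatchedLeaves (t : Tree V) (M : Finset (Sym2 V)) : Finset V :=
  Finset.univ.filter (fun a => t.IsLeaf a ∧ ∀ e ∈ M, a ∉ e)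

/-- `M_F = F(L,L) \ W`. -/
noncomputable def MFlinks (t : Tree V) (E F : Finset (Sym2 V)) : Finset (Sym2 V) :=
  (F.filter (fun e => ∀ x ∈ e, t.IsLeaf x)) \ Wlinks t E

/-- `N = {bb' ∈ M : each of b, b' is unmatched by M_F}`. -/
noncomputable def Nlinks (t : Tree V) (E F M : Finset (Sym2 V)) : Finset (Sym2 V) :=
  M.filter (fun e => ∀ b ∈ e, ∀ f ∈ MFlinks t E F, b ∉ f)

/-- `J` : the set of links of `F` not incident to a locked leaf. -/
noncomputable def Jlinks (t : Tree V) (E F : Finset (Sym2 V)) : Finset (Sym2 V) :=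
  F.filter (fun e => ∀ x ∈ e, ¬ IsLockedLeaf t E x)

/-- The lower bound `(3/2)|M| + |U| + (1/2)|N| + (1/2) Σ_{x ∈ X} d_J(x)`. -/
noncomputable def LB (t : Tree V) (E F M : Finset (Sym2 V)) : ℚ :=
  (3 / 2 : ℚ) * (M.card : ℚ) + ((unmatchedLeaves t M).card : ℚ)
    + (1 / 2 : ℚ) * ((Nlinks t E F M).card : ℚ)
    + (1 / 2 : ℚ) * ∑ x ∈ Xset t E, (deg (Jlinks t E F) x : ℚ)

/-! ### Subtrees of `T/I`, semi-closed trees, credits -/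

/-- `T'` (the rooted subtree of `T/I` with root `c`) is `M`-compatible. -/
def MCompatible (t : Tree V) (I M : Finset (Sym2 V)) (c : QT t I) : Prop :=
  ∀ e ∈ M, (∀ x ∈ e, inT t I c x) ∨ (∀ x ∈ e, ¬ inT t I c x)

/-- `T'` is semi-closed (w.r.t. `M`): `M`-compatible and closed w.r.t. its unmatched leaves. -/
def SemiClosedQ (t : Tree V) (I E M : Finset (Sym2 V)) (c : QT t I) : Prop :=
  MCompatible t I M c ∧
  ∀ x y, s(x, y) ∈ E → inT t I c x → qleafRep t I x → ¬ matchedRep t I M x → inT t I c y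

/-- `T'` is minimally semi-closed. -/
def MinSemiClosedQ (t : Tree V) (I E M : Finset (Sym2 V)) (c : QT t I) : Prop :=
  SemiClosedQ t I E M c ∧
  ∀ c' : QT t I, below t I c c' → c' ≠ c → ¬ SemiClosedQ t I E M c'

/-- `I'` is an exact cover of `T'` : the set of edges of `T/I` covered by `I'` is exactly
the edge set of `T'`. -/
def IsExactCoverQ (t : Tree V) (I : Finset (Sym2 V)) (c : QT t I) (I' : Finset (Sym2 V)) : Prop :=
  ∀ w, w ≠ t.root → ¬ coveredBy t I w → (coveredBy t I' w ↔ inT t I c (t.parent w))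

/-- `up(U')` : the set of up-links of the unmatched leaves of `T'`. -/
noncomputable def upOfQ (t : Tree V) (I E M : Finset (Sym2 V)) (c : QT t I) :
    Finset (Sym2 V) :=
  E.filter (fun e => ∃ a u, e = s(a, u) ∧ inT t I c a ∧ qleafRep t I a ∧
    ¬ matchedRep t I M a ∧ qUpNode t I E a u)

/-- `M` is a matching on the leaves of `T/I`. -/
def IsLeafMatchingQ (t : Tree V) (I M : Finset (Sym2 V)) : Prop :=
  (∀ e ∈ M, ∃ a b, e = s(a, b) ∧ qleafRep t I a ∧ qleafRep t I b ∧ ¬ rel t I a b) ∧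
  ∀ e ∈ M, ∀ f ∈ M, e ≠ f → ∀ x, x ∈ e → ∀ y, y ∈ f → ¬ rel t I x y

/-- `L' = L(T')` as a set of nodes of `T/I`. -/
noncomputable def LsetQ (t : Tree V) (I : Finset (Sym2 V)) (c : QT t I) : Finset (QT t I) :=
  Finset.univ.filter (fun d => below t I c d ∧ qleafRep t I d.out)

/-- `U'` : the `M`-unmatched leaves of `T'`. -/
noncomputable def UsetQ (t : Tree V) (I M : Finset (Sym2 V)) (c : QT t I) : Finset (QT t I) :=
  Finset.univ.filter
    (fun d => below t I c d ∧ qleafRep t I d.out ∧ ¬ matchedRep t I M d.out)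

/-- `C'` : the non-leaf compound nodes of `T'`. -/
noncomputable def CsetQ (t : Tree V) (I : Finset (Sym2 V)) (c : QT t I) : Finset (QT t I) :=
  Finset.univ.filter
    (fun d => below t I c d ∧ qcompoundRep t I d.out ∧ ¬ qleafRep t I d.out)

/-- `M' = M(T')` : the links of `M` with both ends in `T'`. -/
noncomputable def MlinksQ (t : Tree V) (I M : Finset (Sym2 V)) (c : QT t I) :
    Finset (Sym2 V) :=
  M.filter (fun e => ∀ x ∈ e, inT t I c x)

/-- `S'` : the stems of `T'`. -/
noncomputable def SsetQ (t : Tree V) (I E : Finset (Sym2 V)) (c : QT t I) : Finset (QT t I) :=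
  Finset.univ.filter (fun d => below t I c d ∧ qStem t I E d.out)

/-- `S'_1` : the stems of `T'` whose twin link lies in `F`. -/
noncomputable def S1setQ (t : Tree V) (I E F : Finset (Sym2 V)) (c : QT t I) :
    Finset (QT t I) :=
  Finset.univ.filter (fun d => below t I c d ∧
    ∃ a b, qTwinAt t I E a b ∧ s(a, b) ∈ F ∧ qIsLCA t I d.out a b)

/-- `X'` : the original nodes of `T'` lying in `X`. -/
noncomputable def XsetQ (t : Tree V) (I E : Finset (Sym2 V)) (c : QT t I) : Finset (QT t I) :=
  Finset.univ.filter
    (fun d => below t I c d ∧ ¬ qcompoundRep t I d.out ∧ d.out ∈ Xset t E)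

/-- `tickets(T') = |N(T')| + Σ_{x ∈ X'} d_J(x)`. -/
noncomputable def ticketsQ (t : Tree V) (I E F M : Finset (Sym2 V)) (c : QT t I) : ℕ :=
  ((Nlinks t E F M).filter (fun e => ∀ x ∈ e, inT t I c x)).card
    + ∑ d ∈ XsetQ t I E c, deg (Jlinks t E F) d.out

/-- `coupons(T')` : one coupon for each unmatched leaf and each compound node of `T'`,
and `3/2` coupons for each link of `M(T')`. -/
noncomputable def couponsQ (t : Tree V) (I M : Finset (Sym2 V)) (c : QT t I) : ℚ :=
  ((Finset.univ.filter (fun d : QT t I => below t I c d ∧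
      ((qleafRep t I d.out ∧ ¬ matchedRep t I M d.out) ∨ qcompoundRep t I d.out))).card : ℚ)
    + (3 / 2 : ℚ) * ((MlinksQ t I M c).card : ℚ)

/-- `credit(T') = coupons(T') + tickets(T')/2`. -/
noncomputable def creditQ (t : Tree V) (I E F M : Finset (Sym2 V)) (c : QT t I) : ℚ :=
  couponsQ t I M c + (ticketsQ t I E F M c : ℚ) / 2

/-- `T'` is deficient: `credit(T') < |U'| + |M'| + 1`. -/
def DeficientQ (t : Tree V) (I E F M : Finset (Sym2 V)) (c : QT t I) : Prop :=
  creditQ t I E F M c < ((UsetQ t I M c).card : ℚ) + ((MlinksQ t I M c).card : ℚ) + 1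

/-! ### Invariants and greedy steps -/

/-- Credit Invariant: the credit of every subtree of `T/I` is distributed as described:
coupons on unmatched leaves, compound nodes and links of `M`, tickets on links of `N` and
original nodes of `X`. -/
def CreditInvariant (t : Tree V) (E F M I : Finset (Sym2 V)) : Prop :=
  F ⊆ E ∧ M ⊆ E ∧
  ∀ c : QT t I, creditQ t I E F M c = couponsQ t I M c + (ticketsQ t I E F M c : ℚ) / 2

/-- Degree in `T/I` : the number of links of `F` with exactly one end in the class of `x`. -/
noncomputable def qdegQ (t : Tree V) (I F : Finset (Sym2 V)) (x : V) : ℕ :=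
  (F.filter (fun e => (∃ z, z ∈ e ∧ rel t I z x) ∧ ∃ z, z ∈ e ∧ ¬ rel t I z x)).card

/-- Matching Invariant: `M` is a matching on the leaves of `T/I` and `d_F(b) = 1` for
every leaf `b` of `T/I` matched by `M`. -/
def MatchingInvariant (t : Tree V) (F M I : Finset (Sym2 V)) : Prop :=
  IsLeafMatchingQ t I M ∧ ∀ e ∈ M, ∀ b, b ∈ e → qdegQ t I F b = 1

/-- A greedy locking-tree contraction step. -/
def LockStep (t : Tree V) (E M : Finset (Sym2 V)) (I I₂ : Finset (Sym2 V)) : Prop :=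
  ∃ a b b' v u,
    IsLockingTree t E a b b' v ∧
    (∀ e ∈ M, a ∉ e) ∧ (∀ e ∈ M, b ∉ e) ∧ (∀ e ∈ M, b' ∉ e) ∧
    (∀ c c' v', IsLockingTree t E b c c' v' → t.desc v v') ∧
    IsUpLink t E a u ∧ I₂ = I ∪ {s(b, b'), s(a, u)}

/-- A greedy link contraction step: contract a link of `E` joining two `M`-unmatched
leaves of `T/I`. -/
def LinkStep (t : Tree V) (E M : Finset (Sym2 V)) (I I₂ : Finset (Sym2 V)) : Prop :=
  ∃ x y, s(x, y) ∈ E ∧ ¬ rel t I x y ∧ qleafRep t I x ∧ qleafRep t I y ∧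
    ¬ matchedRep t I M x ∧ ¬ matchedRep t I M y ∧ I₂ = insert (s(x, y)) I

/-- Contraction of a semi-closed tree with an exact cover. -/
def SemiStep (t : Tree V) (E M : Finset (Sym2 V)) (I I₂ : Finset (Sym2 V)) : Prop :=
  ∃ (c : QT t I) (I' : Finset (Sym2 V)), I' ⊆ E ∧ SemiClosedQ t I E M c ∧
    IsExactCoverQ t I c I' ∧ I₂ = I ∪ I'

/-- A sequence of greedy locking-tree contractions starting from the empty partial solution. -/
inductive LockPhase {V : Type} [Fintype V] [DecidableEq V]
    (t : Tree V) (E M : Finset (Sym2 V)) : Finset (Sym2 V) → Prop where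
  | base : LockPhase t E M ∅
  | step {I I₂ : Finset (Sym2 V)} :
      LockPhase t E M I → LockStep t E M I I₂ → LockPhase t E M I₂

/-- Partial Solution Invariant: `I` is obtained by first exhausting greedy locking-tree
contractions, and then sequentially applying greedy link contractions or contractions of
semi-closed trees with exact covers. -/
inductive PSI {V : Type} [Fintype V] [DecidableEq V]
    (t : Tree V) (E M : Finset (Sym2 V)) : Finset (Sym2 V) → Prop where
  | start {I : Finset (Sym2 V)} :
      LockPhase t E M I → (∀ I₂, ¬ LockStep t E M I I₂) → PSI t E M I
  | link {I I₂ : Finset (Sym2 V)} : PSI t E M I → LinkStep t E M I I₂ → PSI t E M I₂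
  | semi {I I₂ : Finset (Sym2 V)} : PSI t E M I → SemiStep t E M I I₂ → PSI t E M I₂

/-! ### Dangerous trees -/

/-- The witness structure of a 3-leaf dangerous tree: `a` is the unmatched leaf,
`b, b'` are the matched leaves, `ab' ∈ E`, the contraction of `ab'` does not create a new
leaf, and `T'` is `b`-open. -/
def Witness3 (t : Tree V) (I E M : Finset (Sym2 V)) (c : QT t I) (a b b' : V) : Prop :=
  inT t I c a ∧ inT t I c b ∧ inT t I c b' ∧
  qleafRep t I a ∧ qleafRep t I b ∧ qleafRep t I b' ∧
  ¬ rel t I a b ∧ ¬ rel t I a b' ∧ ¬ rel t I b b' ∧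
  ¬ matchedRep t I M a ∧ matchedRep t I M b ∧ matchedRep t I M b' ∧
  (∃ x y, s(x, y) ∈ E ∧ rel t I x a ∧ rel t I y b' ∧
    ¬ qleafRep t (insert (s(x, y)) I) x) ∧
  (∃ u, qUpNode t I E b u ∧ ¬ inT t I c u)

/-- A 3-leaf dangerous tree. -/
def Dangerous3 (t : Tree V) (I E M : Finset (Sym2 V)) (c : QT t I) : Prop :=
  SemiClosedQ t I E M c ∧ (CsetQ t I c).card = 0 ∧ (MlinksQ t I M c).card = 1 ∧
  (LsetQ t I c).card = 3 ∧ (SsetQ t I E c).card = 0 ∧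
  ∃ a b b', Witness3 t I E M c a b b'

/-- A dangerous tree: a 3-leaf dangerous tree, or a 4-leaf tree with one stem, exactly one
twin of which is matched, such that contracting the twin link yields a 3-leaf dangerous tree. -/
def Dangerous (t : Tree V) (I E M : Finset (Sym2 V)) (c : QT t I) : Prop :=
  Dangerous3 t I E M c ∨
  (SemiClosedQ t I E M c ∧ (CsetQ t I c).card = 0 ∧ (MlinksQ t I M c).card = 1 ∧
    (LsetQ t I c).card = 4 ∧ (SsetQ t I E c).card = 1 ∧
    ∃ a b, qTwinAt t I E a b ∧ inT t I c a ∧ inT t I c b ∧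
      (matchedRep t I M a ↔ ¬ matchedRep t I M b) ∧
      Dangerous3 t (insert (s(a, b)) I) E M (qm t (insert (s(a, b)) I) c.out))

/-! ### The switching construction -/

/-- `W̃` : for every 4-leaf minimally semi-closed (dangerous) tree of `T/I`, its twin link. -/
noncomputable def Wtil (t : Tree V) (I E M : Finset (Sym2 V)) : Finset (Sym2 V) :=
  E.filter (fun e => ∃ (a b : V) (c : QT t I), e = s(a, b) ∧ MinSemiClosedQ t I E M c ∧
    (LsetQ t I c).card = 4 ∧ qTwinAt t I E a b ∧ inT t I c a ∧ inT t I c b)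

/-- The canonical ordering witness of a 3-leaf dangerous tree: if both orderings of the
matched leaves qualify, the up-node of `b` is an ancestor of the up-node of `b'`. -/
def Witness3Canon (t : Tree V) (I E M : Finset (Sym2 V)) (c : QT t I) (a b b' : V) : Prop :=
  Witness3 t I E M c a b b' ∧
  (Witness3 t I E M c a b' b →
    ∃ u u', qUpNode t I E b u ∧ qUpNode t I E b' u' ∧ qdescRep t I u u')

/-- `M̃` is obtained from `M` by switching, in each (3-leaf dangerous) tree `D̃` of `T̃`
corresponding to a minimally semi-closed tree of `T/I`, the matching link `bb'` to `ab'`. -/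
def SwitchedMatching (t : Tree V) (I E M Mt : Finset (Sym2 V)) : Prop :=
  ∀ e : Sym2 V, e ∈ Mt ↔
    ((e ∈ M ∧ ∀ c : QT t I, MinSemiClosedQ t I E M c →
        ∀ x, x ∈ e → ¬ inT t (I ∪ Wtil t I E M) (qm t (I ∪ Wtil t I E M) c.out) x) ∨
     (∃ (c : QT t I) (a b b' x y : V), MinSemiClosedQ t I E M c ∧
        Witness3Canon t (I ∪ Wtil t I E M) E M (qm t (I ∪ Wtil t I E M) c.out) a b b' ∧
        e = s(x, y) ∧ e ∈ E ∧ rel t (I ∪ Wtil t I E M) x a ∧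
        rel t (I ∪ Wtil t I E M) y b' ∧
        ¬ qleafRep t (insert e (I ∪ Wtil t I E M)) x))

section StructureHelpers

variable {V : Type} [Fintype V] [DecidableEq V]

private lemma desc_refl (t : Tree V) (v : V) : t.desc v v := ⟨0, rfl⟩

private lemma desc_trans (t : Tree V) {u w v : V} (h1 : t.desc u w) (h2 : t.desc w v) :
    t.desc u v := by
  obtain ⟨n, hn⟩ := h1; obtain ⟨m, hm⟩ := h2
  exact ⟨n + m, by rw [Function.iterate_add_apply, hm, hn]⟩

private lemma desc_total (t : Tree V) {u v x : V} (h1 : t.desc u x) (h2 : t.desc v x) :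
    t.desc u v ∨ t.desc v u := by
  obtain ⟨n, hn⟩ := h1; obtain ⟨m, hm⟩ := h2
  rcases le_total n m with h | h
  · right
    exact ⟨m - n, by rw [← hn, ← Function.iterate_add_apply, Nat.sub_add_cancel h, hm]⟩
  · left
    exact ⟨n - m, by rw [← hm, ← Function.iterate_add_apply, Nat.sub_add_cancel h, hn]⟩

private lemma desc_root (t : Tree V) (a : V) : t.desc t.root a := t.reach a

private lemma rel_refl (t : Tree V) (I : Finset (Sym2 V)) (v : V) : rel t I v v :=
  (relSetoid t I).iseqv.refl v

private lemma rel_symm {t : Tree V} {I : Finset (Sym2 V)} {u v : V} (h : rel t I u v) :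
    rel t I v u := (relSetoid t I).iseqv.symm h

private lemma rel_trans {t : Tree V} {I : Finset (Sym2 V)} {u v w : V}
    (h1 : rel t I u v) (h2 : rel t I v w) : rel t I u w :=
  (relSetoid t I).iseqv.trans h1 h2

private lemma coveredBy_mono {t : Tree V} {I I₂ : Finset (Sym2 V)} (h : I ⊆ I₂) {w : V}
    (hc : coveredBy t I w) : coveredBy t I₂ w := by
  obtain ⟨e, he, hce⟩ := hc; exact ⟨e, h he, hce⟩

private lemma rel_mono {t : Tree V} {I I₂ : Finset (Sym2 V)} (h : I ⊆ I₂) {u v : V}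
    (hr : rel t I u v) : rel t I₂ u v :=
  fun w hw hp => coveredBy_mono h (hr w hw hp)

private lemma rel_insert_link (t : Tree V) (I : Finset (Sym2 V)) (a b : V) :
    rel t (insert (s(a, b)) I) a b := by
  intro w hw hp
  exact ⟨s(a, b), Finset.mem_insert_self _ _, a, b, rfl, hp⟩

/-- If `z` is in the class of `a` and the class of `a` lies in the subtree of the class
of `v`, then so does the class of `z`. -/
private lemma qdescRep_congr_right {t : Tree V} {I : Finset (Sym2 V)} {z a v : V}
    (hza : rel t I z a) (h : qdescRep t I v a) : qdescRep t I v z := by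
  obtain ⟨w, hwa, hwv⟩ := h
  by_cases hc : t.desc w z
  · exact ⟨w, hc, hwv⟩
  · have hwz : rel t I w z := by
      intro e he hp
      rcases hp with ⟨h1, h2⟩ | ⟨h1, h2⟩
      · exact hza e he (Or.inr ⟨desc_trans t h1 hwa, h2⟩)
      · have hna : ¬ t.desc e a := by
          intro hea
          rcases desc_total t hea hwa with h3 | h3
          · exact h2 h3
          · exact hc (desc_trans t h3 h1)
        exact hza e he (Or.inl ⟨h1, hna⟩)
    exact ⟨z, desc_refl t z, rel_trans (rel_symm hwz) hwv⟩

private lemma qdescRep_trans {t : Tree V} {I : Finset (Sym2 V)} {v u a : V}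
    (h1 : qdescRep t I v u) (h2 : qdescRep t I u a) : qdescRep t I v a := by
  obtain ⟨w1, hw1u, hw1v⟩ := h1
  obtain ⟨w2, hw2a, hw2u⟩ := h2
  by_cases hc : t.desc w1 w2
  · exact ⟨w1, desc_trans t hc hw2a, hw1v⟩
  · have hrel : rel t I w1 w2 := by
      intro e he hp
      rcases hp with ⟨h1', h2'⟩ | ⟨h1', h2'⟩
      · exact hw2u e he (Or.inr ⟨desc_trans t h1' hw1u, h2'⟩)
      · have hnu : ¬ t.desc e u := by
          intro heu
          rcases desc_total t heu hw1u with h3 | h3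
          · exact h2' h3
          · exact hc (desc_trans t h3 h1')
        exact hw2u e he (Or.inl ⟨h1', hnu⟩)
    exact ⟨w2, hw2a, rel_trans (rel_symm hrel) hw1v⟩

private lemma rel_of_qdescRep_antisymm {t : Tree V} {I : Finset (Sym2 V)} {u v : V}
    (h1 : qdescRep t I u v) (h2 : qdescRep t I v u) : rel t I u v := by
  obtain ⟨w1, hw1v, hw1u⟩ := h1
  obtain ⟨w2, hw2u, hw2v⟩ := h2
  have hw1 : rel t I w1 v := by
    intro e he hp
    rcases hp with ⟨h1', h2'⟩ | ⟨h1', h2'⟩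
    · exact absurd (desc_trans t h1' hw1v) h2'
    · by_cases hew2 : t.desc e w2
      · exact hw1u e he (Or.inr ⟨desc_trans t hew2 hw2u, h2'⟩)
      · exact hw2v e he (Or.inr ⟨h1', hew2⟩)
  exact rel_trans (rel_symm hw1u) hw1

private lemma qdescRep_total {t : Tree V} {I : Finset (Sym2 V)} {u v a : V}
    (h1 : qdescRep t I u a) (h2 : qdescRep t I v a) :
    qdescRep t I u v ∨ qdescRep t I v u := by
  obtain ⟨w1, hw1a, hw1u⟩ := h1
  obtain ⟨w2, hw2a, hw2v⟩ := h2
  rcases desc_total t hw1a hw2a with h | h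
  · exact Or.inl (qdescRep_congr_right (rel_symm hw2v) ⟨w1, h, hw1u⟩)
  · exact Or.inr (qdescRep_congr_right (rel_symm hw1u) ⟨w2, h, hw2v⟩)

private lemma qleafRep_congr {t : Tree V} {I : Finset (Sym2 V)} {a a' : V}
    (h : rel t I a a') (hl : qleafRep t I a) : qleafRep t I a' := by
  refine ⟨fun hr => hl.1 (rel_trans h hr), fun v hv => ?_⟩
  exact rel_trans (hl.2 v (rel_trans hv (rel_symm h))) h

private lemma qTwinAt_symm {t : Tree V} {I E : Finset (Sym2 V)} {a b : V}
    (h : qTwinAt t I E a b) : qTwinAt t I E b a := by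
  obtain ⟨h1, h2, h3, h4, h5⟩ := h
  have hsw : s(b, a) = s(a, b) := Sym2.eq_swap
  refine ⟨h2, h1, fun hr => h3 (rel_symm hr), by rwa [hsw], ?_⟩
  rw [hsw]
  exact qleafRep_congr (rel_insert_link t I a b) h5

private lemma qIsLCA_symm {t : Tree V} {I : Finset (Sym2 V)} {x a b : V}
    (h : qIsLCA t I x a b) : qIsLCA t I x b a :=
  ⟨h.2.1, h.1, fun w hb ha => h.2.2 w ha hb⟩

private lemma exists_boundary {t : Tree V} {R : V → Prop} :
    ∀ (k : ℕ) (z : V), R (t.parent^[k] z) → ¬ R z → ∃ v, R (t.parent v) ∧ ¬ R v := by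
  intro k
  induction k with
  | zero => intro z h hn; exact absurd h hn
  | succ k ih =>
    intro z h hn
    by_cases hz : R (t.parent z)
    · exact ⟨z, hz, hn⟩
    · exact ih (t.parent z) (by rwa [← Function.iterate_succ_apply]) hz

private lemma leaf_no_desc {t : Tree V} {I : Finset (Sym2 V)} {b a : V}
    (hleaf : qleafRep t I b) (hd : qdescRep t I b a) (hna : ¬ rel t I a b) : False := by
  obtain ⟨w, hwa, hwb⟩ := hd
  obtain ⟨n, hn⟩ := hwa
  obtain ⟨v, hv1, hv2⟩ :=
    exists_boundary (R := fun v => rel t I v b) n a (by rw [hn]; exact hwb) hna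
  exact hv2 (hleaf.2 v hv1)

/-- All edges on the tree path from an ancestor `w''` of `a` lying in a class weakly above
the stem `x'` of the twin pair `(a', b')` (with `a ~ a'`) down to `a` are covered after
inserting the twin link. -/
private lemma rel_insert_anc {t : Tree V} {I : Finset (Sym2 V)} {a a' b' x' w'' : V}
    (hra : rel t I a a') (hlca : qIsLCA t I x' a' b')
    (hw1 : t.desc w'' a) (hw2 : rel t I w'' x') :
    rel t (insert (s(a', b')) I) w'' a := by
  intro e he hp
  rcases hp with ⟨h1, h2⟩ | ⟨h1, h2⟩
  · exact absurd (desc_trans t h1 hw1) h2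
  · by_cases hA : t.desc e a'
    · by_cases hB : t.desc e b'
      · have he3 : qdescRep t I e x' :=
          hlca.2.2 e ⟨e, hA, rel_refl t I e⟩ ⟨e, hB, rel_refl t I e⟩
        have hcomp : t.desc w'' e := by
          rcases desc_total t h1 hw1 with h | h
          · exact absurd h h2
          · exact h
        have hrel : rel t I e x' := rel_of_qdescRep_antisymm he3 ⟨w'', hcomp, hw2⟩
        have hrew : rel t I e w'' := rel_trans hrel (rel_symm hw2)
        exact coveredBy_mono (Finset.subset_insert _ _)
          (hrew e he (Or.inl ⟨desc_refl t e, h2⟩))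
      · exact ⟨s(a', b'), Finset.mem_insert_self _ _, a', b', rfl, Or.inl ⟨hA, hB⟩⟩
    · exact coveredBy_mono (Finset.subset_insert _ _) (hra e he (Or.inl ⟨h1, hA⟩))

private lemma rel_insert_anc' {t : Tree V} {I : Finset (Sym2 V)} {a a' b' x' u : V}
    (hra : rel t I a a') (hlca : qIsLCA t I x' a' b')
    (hqa : qdescRep t I x' a) (hu1 : t.desc u a) (hu2 : qdescRep t I x' u) :
    rel t (insert (s(a', b')) I) u a := by
  obtain ⟨w'', hw1, hw2⟩ := hqa
  have hbase := rel_insert_anc hra hlca hw1 hw2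
  rcases desc_total t hu1 hw1 with h | h
  · have h2 : qdescRep t I u x' :=
      qdescRep_congr_right (rel_symm hw2) ⟨u, h, rel_refl t I u⟩
    have hux : rel t I u x' := rel_of_qdescRep_antisymm h2 hu2
    have h3 : rel t (insert (s(a', b')) I) u w'' :=
      rel_mono (Finset.subset_insert _ _) (rel_trans hux (rel_symm hw2))
    exact rel_trans h3 hbase
  · intro e he hp
    rcases hp with ⟨h1, h2⟩ | ⟨h1, h2⟩
    · exact absurd (desc_trans t h1 hu1) h2
    · have hnw : ¬ t.desc e w'' := fun hew => h2 (desc_trans t hew h)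
      exact hbase e he (Or.inr ⟨h1, hnw⟩)

/-- If `b` is merged with `a` after inserting a link `a'b'`, then in `T/I` the class of
`b` is a class-ancestor of `a`, `a'` or `b'`. -/
private lemma rel_insert_to_qdescRep {t : Tree V} {I : Finset (Sym2 V)} {b a a' b' : V}
    (h : rel t (insert (s(a', b')) I) b a) :
    qdescRep t I b a ∨ qdescRep t I b a' ∨ qdescRep t I b b' := by
  classical
  have hex : ∃ n, t.desc (t.parent^[n] b) a := by
    obtain ⟨d, hd⟩ := t.reach b
    exact ⟨d, by rw [hd]; exact desc_root t a⟩
  have hP : t.desc (t.parent^[Nat.find hex] b) a := Nat.find_spec hex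
  set n₀ := Nat.find hex with hn₀def
  rcases Nat.eq_zero_or_pos n₀ with h0 | h0
  · left
    refine ⟨b, ?_, rel_refl t I b⟩
    rw [h0] at hP; exact hP
  · by_cases hall : ∀ j < n₀, coveredBy t I (t.parent^[j] b)
    · left
      refine ⟨t.parent^[n₀] b, hP, rel_symm ?_⟩
      intro e he hp
      rcases hp with ⟨h1, h2⟩ | ⟨h1, h2⟩
      · obtain ⟨j, hj⟩ := h1
        have hjlt : j < n₀ := by
          by_contra hge
          push_neg at hge
          exact h2 ⟨j - n₀, by
            rw [← Function.iterate_add_apply, Nat.sub_add_cancel hge, hj]⟩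
        exact hj ▸ hall j hjlt
      · exact absurd (desc_trans t h1 ⟨n₀, rfl⟩) h2
    · push_neg at hall
      obtain ⟨j', hj'lt, hj'nc⟩ := hall
      have hex2 : ∃ j, j < n₀ ∧ ¬ coveredBy t I (t.parent^[j] b) := ⟨j', hj'lt, hj'nc⟩
      obtain ⟨hj₀lt, hj₀nc⟩ := Nat.find_spec hex2
      set j₀ := Nat.find hex2 with hj₀def
      have hnda : ¬ t.desc (t.parent^[j₀] b) a := fun hd =>
        absurd (Nat.find_le hd) (not_le.mpr hj₀lt)
      have hne_root : t.parent^[j₀] b ≠ t.root := fun hr =>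
        hnda (hr ▸ desc_root t a)
      have hcov2 : coveredBy t (insert (s(a', b')) I) (t.parent^[j₀] b) :=
        h _ hne_root (Or.inl ⟨⟨j₀, rfl⟩, hnda⟩)
      obtain ⟨e, he, p, q, hepq, hop⟩ := hcov2
      rcases Finset.mem_insert.mp he with heq | heI
      · have hrel_bu : rel t I b (t.parent^[j₀] b) := by
          intro e' he' hp'
          rcases hp' with ⟨h1, h2⟩ | ⟨h1, h2⟩
          · obtain ⟨j, hj⟩ := h1
            have hjlt : j < j₀ := by
              by_contra hge
              push_neg at hge
              exact h2 ⟨j - j₀, by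
                rw [← Function.iterate_add_apply, Nat.sub_add_cancel hge, hj]⟩
            have hc : coveredBy t I (t.parent^[j] b) := by
              by_contra hnc
              exact Nat.find_min hex2 hjlt ⟨lt_trans hjlt hj₀lt, hnc⟩
            exact hj ▸ hc
          · exact absurd (desc_trans t h1 ⟨j₀, rfl⟩) h2
        have hop' : t.onPath (t.parent^[j₀] b) a' b' := by
          rw [heq] at hepq
          rcases Sym2.eq_iff.mp hepq with ⟨hp1, hp2⟩ | ⟨hp1, hp2⟩
          · rw [← hp1, ← hp2] at hop; exact hop
          · rw [← hp1, ← hp2] at hop; exact Or.symm hop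
        rcases hop' with ⟨h1, h2⟩ | ⟨h1, h2⟩
        · exact Or.inr (Or.inl ⟨_, h1, rel_symm hrel_bu⟩)
        · exact Or.inr (Or.inr ⟨_, h1, rel_symm hrel_bu⟩)
      · exact absurd ⟨e, heI, p, q, hepq, hop⟩ hj₀nc

private lemma stem_aux {t : Tree V} {I E : Finset (Sym2 V)} {a b x a' b' x' : V}
    (htw : qTwinAt t I E a b) (hlx : qIsLCA t I x a b)
    (htw' : qTwinAt t I E a' b') (hlx' : qIsLCA t I x' a' b')
    (hra : rel t I a a') (hdx : qdescRep t I x' x) :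
    rel t I x x' := by
  by_cases hbb : rel t I b b'
  · have h1 : qdescRep t I x b' := qdescRep_congr_right (rel_symm hbb) hlx.2.1
    have h2 : qdescRep t I x a' := qdescRep_congr_right (rel_symm hra) hlx.1
    exact rel_of_qdescRep_antisymm (hlx'.2.2 x h2 h1) hdx
  · exfalso
    have hx'a : qdescRep t I x' a := qdescRep_congr_right hra hlx'.1
    obtain ⟨wa, hwa1, hwa2⟩ := hlx.1
    have hx'wa : qdescRep t I x' wa := qdescRep_congr_right hwa2 hdx
    have hwa_rel : rel t (insert (s(a', b')) I) wa a :=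
      rel_insert_anc' hra hlx' hx'a hwa1 hx'wa
    have hx_rel : rel t (insert (s(a', b')) I) x a :=
      rel_trans (rel_symm (rel_mono (Finset.subset_insert _ I) hwa2)) hwa_rel
    obtain ⟨wb, hwb1, hwb2⟩ := hlx.2.1
    have hwb_rel : rel t (insert (s(a', b')) I) wb a :=
      rel_trans (rel_mono (Finset.subset_insert _ I) hwb2) hx_rel
    by_cases hba : rel t (insert (s(a', b')) I) b a
    · rcases rel_insert_to_qdescRep hba with hcase | hcase | hcase
      · exact leaf_no_desc htw.2.1 hcase htw.2.2.1
      · exact leaf_no_desc htw.2.1 (qdescRep_congr_right hra hcase) htw.2.2.1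
      · exact leaf_no_desc htw.2.1 hcase (fun hr => hbb (rel_symm hr))
    · obtain ⟨k, hk⟩ := hwb1
      obtain ⟨v, hv1, hv2⟩ :=
        exists_boundary (R := fun v => rel t (insert (s(a', b')) I) v a) k b
          (by rw [hk]; exact hwb_rel) hba
      have hla : qleafRep t (insert (s(a', b')) I) a :=
        qleafRep_congr (rel_symm (rel_mono (Finset.subset_insert _ I) hra))
          htw'.2.2.2.2
      exact hv2 (hla.2 v hv1)

private lemma stem_eq {t : Tree V} {I E : Finset (Sym2 V)} {a b x a' b' x' : V}
    (htw : qTwinAt t I E a b) (hlx : qIsLCA t I x a b)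
    (htw' : qTwinAt t I E a' b') (hlx' : qIsLCA t I x' a' b')
    (hra : rel t I a a') : rel t I x x' := by
  have h1 : qdescRep t I x' a := qdescRep_congr_right hra hlx'.1
  rcases qdescRep_total hlx.1 h1 with h | h
  · exact rel_symm (stem_aux htw' hlx' htw hlx (rel_symm hra) h)
  · exact stem_aux htw hlx htw' hlx' hra h

end StructureHelpers


/-- under the Credit and Matching Invariants, if `T'` is a deficient
semi-closed tree of `T/I`, then `|C'| = 0` and either `|M'| = |S'| = 0` with
`tickets(T') ≤ 1`, or `|M'| = 1`, `|S'| ≤ 2` and `tickets(T') = 0`. -/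
theorem deficient_CM_structure (t : Tree V) (E F M I : Finset (Sym2 V))
    (hnd : ∀ e ∈ E, ¬ e.IsDiag) (hsh : ShadowClosed t E) (hEcov : IsCover t E)
    (hF : IsGoodCover t E F)
    (hCI : CreditInvariant t E F M I) (hMI : MatchingInvariant t F M I)
    (hnoGreedy : ∀ I₂, ¬ LinkStep t E M I I₂)
    (c : QT t I) (hsc : SemiClosedQ t I E M c) (hdef : DeficientQ t I E F M c) :
    (CsetQ t I c).card = 0 ∧
      (((MlinksQ t I M c).card = 0 ∧ (SsetQ t I E c).card = 0 ∧
          ticketsQ t I E F M c ≤ 1) ∨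
       ((MlinksQ t I M c).card = 1 ∧ (SsetQ t I E c).card ≤ 2 ∧
          ticketsQ t I E F M c = 0)) := by
  classical
  -- Every stem of `T'` yields a link of `M'` matching one of its twins.
  have hstem : ∀ d ∈ SsetQ t I E c, ∃ e ∈ MlinksQ t I M c, ∃ z, z ∈ e ∧
      ∃ a b, qTwinAt t I E a b ∧ qIsLCA t I d.out a b ∧ rel t I z a := by
    intro d hd
    simp only [SsetQ, Finset.mem_filter, Finset.mem_univ, true_and] at hd
    obtain ⟨hbel, a, b, htw, hlca⟩ := hd
    by_cases hma : matchedRep t I M a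
    · obtain ⟨e, heM, z, hz, hrz⟩ := hma
      have hin : inT t I c a := qdescRep_trans hbel hlca.1
      have hinz : inT t I c z := qdescRep_congr_right hrz hin
      rcases hsc.1 e heM with hall | hnone
      · exact ⟨e, Finset.mem_filter.mpr ⟨heM, hall⟩, z, hz, a, b, htw, hlca, hrz⟩
      · exact absurd hinz (hnone z hz)
    · by_cases hmb : matchedRep t I M b
      · obtain ⟨e, heM, z, hz, hrz⟩ := hmb
        have hin : inT t I c b := qdescRep_trans hbel hlca.2.1
        have hinz : inT t I c z := qdescRep_congr_right hrz hin
        rcases hsc.1 e heM with hall | hnone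
        · exact ⟨e, Finset.mem_filter.mpr ⟨heM, hall⟩, z, hz, b, a,
            qTwinAt_symm htw, qIsLCA_symm hlca, hrz⟩
        · exact absurd hinz (hnone z hz)
      · exact absurd
          ⟨a, b, htw.2.2.2.1, htw.2.2.1, htw.1, htw.2.1, hma, hmb, rfl⟩
          (hnoGreedy (insert (s(a, b)) I))
  -- The counting argument.
  have hsub : UsetQ t I M c ∪ CsetQ t I c ⊆
      Finset.univ.filter (fun d : QT t I => below t I c d ∧
        ((qleafRep t I d.out ∧ ¬ matchedRep t I M d.out) ∨ qcompoundRep t I d.out)) := by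
    intro d hd
    rcases Finset.mem_union.mp hd with h | h
    · simp only [UsetQ, Finset.mem_filter, Finset.mem_univ, true_and] at h ⊢
      exact ⟨h.1, Or.inl ⟨h.2.1, h.2.2⟩⟩
    · simp only [CsetQ, Finset.mem_filter, Finset.mem_univ, true_and] at h ⊢
      exact ⟨h.1, Or.inr h.2.1⟩
  have hdisj : Disjoint (UsetQ t I M c) (CsetQ t I c) := by
    rw [Finset.disjoint_left]
    intro d h1 h2
    simp only [UsetQ, Finset.mem_filter, Finset.mem_univ, true_and] at h1
    simp only [CsetQ, Finset.mem_filter, Finset.mem_univ, true_and] at h2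
    exact h2.2.2 h1.2.1
  have hN : (UsetQ t I M c).card + (CsetQ t I c).card ≤
      (Finset.univ.filter (fun d : QT t I => below t I c d ∧
        ((qleafRep t I d.out ∧ ¬ matchedRep t I M d.out) ∨ qcompoundRep t I d.out))).card := by
    rw [← Finset.card_union_of_disjoint hdisj]
    exact Finset.card_le_card hsub
  have hdef' : couponsQ t I M c + (ticketsQ t I E F M c : ℚ) / 2 <
      ((UsetQ t I M c).card : ℚ) + ((MlinksQ t I M c).card : ℚ) + 1 := hdef
  unfold couponsQ at hdef'
  have hNQ : ((UsetQ t I M c).card : ℚ) + ((CsetQ t I c).card : ℚ) ≤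
      ((Finset.univ.filter (fun d : QT t I => below t I c d ∧
        ((qleafRep t I d.out ∧ ¬ matchedRep t I M d.out) ∨ qcompoundRep t I d.out))).card : ℚ) := by
    exact_mod_cast hN
  have hkeyQ : ((2 * (CsetQ t I c).card + (MlinksQ t I M c).card
      + ticketsQ t I E F M c : ℕ) : ℚ) < 2 := by
    push_cast
    linarith
  have hkey : 2 * (CsetQ t I c).card + (MlinksQ t I M c).card
      + ticketsQ t I E F M c < 2 := by exact_mod_cast hkeyQ
  have hC0 : (CsetQ t I c).card = 0 := by omega
  refine ⟨hC0, ?_⟩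
  rcases (by omega : ((MlinksQ t I M c).card = 0 ∧ ticketsQ t I E F M c ≤ 1) ∨
      ((MlinksQ t I M c).card = 1 ∧ ticketsQ t I E F M c = 0)) with ⟨hM0, htk⟩ | ⟨hM1, htk⟩
  · -- no link of `M'` : no stems at all
    left
    refine ⟨hM0, ?_, htk⟩
    rw [Finset.card_eq_zero]
    rw [Finset.eq_empty_iff_forall_notMem]
    intro d hd
    obtain ⟨e, heM', _⟩ := hstem d hd
    rw [Finset.card_eq_zero.mp hM0] at heM'
    exact absurd heM' (Finset.notMem_empty e)
  · -- a unique link of `M'` : at most two stems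
    right
    refine ⟨hM1, ?_, htk⟩
    obtain ⟨e0, he0⟩ := Finset.card_eq_one.mp hM1
    have he0M : e0 ∈ M := by
      have h := he0 ▸ Finset.mem_singleton_self e0
      exact (Finset.mem_filter.mp h).1
    obtain ⟨p, q, hpq, -⟩ := hMI.1.1 e0 he0M
    have hchoice : ∀ d ∈ SsetQ t I E c, ∃ z, z ∈ ({p, q} : Finset V) ∧
        ∃ a b, qTwinAt t I E a b ∧ qIsLCA t I d.out a b ∧ rel t I z a := by
      intro d hd
      obtain ⟨e, heM', z, hz, rest⟩ := hstem d hd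
      have hee : e = e0 := by
        rw [he0] at heM'
        exact Finset.mem_singleton.mp heM'
      subst hee
      rw [hpq] at hz
      refine ⟨z, ?_, rest⟩
      rcases Sym2.mem_iff.mp hz with h | h <;> simp [h]
    have hcard : (SsetQ t I E c).card ≤ ({p, q} : Finset V).card := by
      apply Finset.card_le_card_of_injOn
        (fun d => if h : ∃ z, z ∈ ({p, q} : Finset V) ∧
          ∃ a b, qTwinAt t I E a b ∧ qIsLCA t I d.out a b ∧ rel t I z a then
            h.choose else p)
      · intro d hd
        have h := hchoice d hd
        simp only [dif_pos h]
        exact h.choose_spec.1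
      · intro d1 hd1 d2 hd2 heq
        have h1 := hchoice d1 (Finset.mem_coe.mp hd1)
        have h2 := hchoice d2 (Finset.mem_coe.mp hd2)
        simp only [dif_pos h1, dif_pos h2] at heq
        obtain ⟨hz1, a1, b1, tw1, l1, rz1⟩ := h1.choose_spec
        obtain ⟨hz2, a2, b2, tw2, l2, rz2⟩ := h2.choose_spec
        have rz2' : rel t I h1.choose a2 := by rw [heq]; exact rz2
        have hra : rel t I a1 a2 := rel_trans (rel_symm rz1) rz2'
        have hxx : rel t I d1.out d2.out := stem_eq tw1 l1 tw2 l2 hra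
        have hqq : (Quotient.mk (relSetoid t I) d1.out) =
            (Quotient.mk (relSetoid t I) d2.out) := Quotient.sound hxx
        rwa [Quotient.out_eq, Quotient.out_eq] at hqq
    calc (SsetQ t I E c).card ≤ ({p, q} : Finset V).card := hcard
      _ ≤ 2 := by
        refine le_trans (Finset.card_insert_le _ _) ?_
        simp

end TAP
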